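/- In the essential intersection type system, if Γ ⊢ MN : μ, then there exists σ such that Γ ⊢ M : σ → μ and Γ ⊢ N : σ. -/

import Mathlib

/-- Terms of the λ⊥-calculus (de Bruijn indices). -/
inductive Tm : Type
  | var : ℕ → Tm
  | bot : Tm
  | lam : Tm → Tm
  | app : Tm → Tm → Tm
  deriving DecidableEq

namespace Tm

/-- Lift (shift by one) all de Bruijn indices ≥ k. -/
def lift : Tm → ℕ → Tm
  | var n, k => if n < k then var n else var (n+1)
  | bot, _ => bot
  | lam M, k => lam (lift M (k+1))
  | app M N, k => app (lift M k) (lift N k)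

/-- Capture-avoiding substitution of N for variable k. -/
def subst : Tm → ℕ → Tm → Tm
  | var n, k, N => if n < k then var n else if n = k then N else var (n-1)
  | bot, _, _ => bot
  | lam M, k, N => lam (subst M (k+1) (lift N 0))
  | app M P, k, N => app (subst M k N) (subst P k N)

/-- One-step β⊥-reduction (compatible closure). -/
inductive Step : Tm → Tm → Prop
  | beta (M N : Tm) : Step (app (lam M) N) (subst M 0 N)
  | botApp (N : Tm) : Step (app bot N) bot
  | botLam : Step (lam bot) bot
  | appL {M M'} (N) : Step M M' → Step (app M N) (app M' N)
  | appR (M) {N N'} : Step N N' → Step (app M N) (app M N')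
  | lamC {M M'} : Step M M' → Step (lam M) (lam M')

/-- Multi-step reduction. -/
def Red : Tm → Tm → Prop := Relation.ReflTransGen Step

/-- β⊥-conversion: M = N iff they have a common reduct. -/
def Conv (M N : Tm) : Prop := ∃ P, Red M P ∧ Red N P

/-- The identity combinator I = λx.x. -/
def iTm : Tm := lam (var 0)

/-- Composition M ∘ N = λz.M(Nz). -/
def comp (M N : Tm) : Tm := lam (app (lift M 0) (app (lift N 0) (var 0)))

/-- Apply M to a list of arguments. -/
def applist (M : Tm) (Ms : List Tm) : Tm := Ms.foldl app M

/-- Iterated λ-abstraction. -/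
def iterLam : ℕ → Tm → Tm
  | 0, M => M
  | n+1, M => lam (iterLam n M)

/-- The selector λt x₁ … xₘ. t  (a simple right inverse). -/
def sel (m : ℕ) : Tm := iterLam (m+1) (var m)

/-- Number of initial λ-abstractions of a term. -/
def leadLams : Tm → ℕ
  | lam M => leadLams M + 1
  | _ => 0

end Tm

mutual
/-- Strict intersection types μ ::= φ | ω | σ → μ. -/
inductive STy : Type
  | tvar : ℕ → STy
  | omega : STy
  | arrow : ITy → STy → STy
/-- Intersections σ ::= μ | σ ∧ σ. -/
inductive ITy : Type
  | strict : STy → ITy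
  | inter : ITy → ITy → ITy
end

/-- The subtyping preorder on (strict) intersection types. -/
inductive SubTy : ITy → ITy → Prop
  | refl (σ) : SubTy σ σ
  | trans {σ τ ρ} : SubTy σ τ → SubTy τ ρ → SubTy σ ρ
  | toOmega (σ) : SubTy σ (.strict .omega)
  | omegaArr : SubTy (.strict .omega) (.strict (.arrow (.strict .omega) .omega))
  | interL (σ τ) : SubTy (.inter σ τ) σ
  | interR (σ τ) : SubTy (.inter σ τ) τ
  | interMono {σ₁ σ₂ τ₁ τ₂} : SubTy σ₁ τ₁ → SubTy σ₂ τ₂ → SubTy (.inter σ₁ σ₂) (.inter τ₁ τ₂)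
  | arrow {σ τ : ITy} {μ ν : STy} : SubTy τ σ → SubTy (.strict μ) (.strict ν) →
      SubTy (.strict (.arrow σ μ)) (.strict (.arrow τ ν))

/-- σ ∼ τ : mutual subtyping. -/
def EqvTy (σ τ : ITy) : Prop := SubTy σ τ ∧ SubTy τ σ

/-- μ is a conjunct (component) of the intersection σ. -/
inductive IsComp : STy → ITy → Prop
  | strict (μ) : IsComp μ (.strict μ)
  | left {μ σ} (τ) : IsComp μ σ → IsComp μ (.inter σ τ)
  | right {μ τ} (σ) : IsComp μ τ → IsComp μ (.inter σ τ)

/-- The essential intersection type assignment system (contexts are de Bruijn lists). -/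
inductive Der : List ITy → Tm → STy → Prop
  | var {Γ n σ μ} : Γ[n]? = some σ → IsComp μ σ → Der Γ (.var n) μ
  | omega (Γ M) : Der Γ M .omega
  | sub {Γ M μ ν} : Der Γ M μ → SubTy (.strict μ) (.strict ν) → Der Γ M ν
  | lam {Γ M σ μ} : Der (σ :: Γ) M μ → Der Γ (.lam M) (.arrow σ μ)
  | app {Γ M N σ μ} : Der Γ M (.arrow σ μ) → (∀ ν, IsComp ν σ → Der Γ N ν) →
      Der Γ (.app M N) μ

/-- A strict type is inhabited if some closed term has it. -/
def InhabS (μ : STy) : Prop := ∃ M, Der [] M μ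

/-- An intersection is inhabited if a single closed term has all its conjuncts. -/
def InhabI (σ : ITy) : Prop := ∃ M, ∀ μ, IsComp μ σ → Der [] M μ

/-- σ → ρ is inhabited: one term inhabits σ → μ for every conjunct μ of ρ. -/
def InhabArrow (σ ρ : ITy) : Prop := ∃ M, ∀ μ, IsComp μ ρ → Der [] M (.arrow σ μ)

/-- ρ₁ → … → ρₘ → μ. -/
def arrows (l : List ITy) (μ : STy) : STy := l.foldr .arrow μ

/-- μ ◁ ν : μ is a retract of ν. -/
def Retract (μ ν : STy) : Prop :=
  ∃ L R, Der [] L (.arrow (.strict ν) μ) ∧ Der [] R (.arrow (.strict μ) ν) ∧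
    Tm.Conv (Tm.comp L R) Tm.iTm

theorem Der.omega_arrow_omega (Γ : List ITy) (M : Tm) :
    Der Γ M (.arrow (.strict .omega) .omega) :=
  (Der.omega Γ M).sub SubTy.omegaArr

theorem Der.sub_codomain {Γ : List ITy} {M : Tm} {σ : ITy} {μ ν : STy}
    (h : Der Γ M (.arrow σ μ)) (hμν : SubTy (.strict μ) (.strict ν)) :
    Der Γ M (.arrow σ ν) :=
  h.sub (SubTy.arrow (SubTy.refl σ) hμν)

/-- inversion for applications. -/
theorem inversion_app {Γ : List ITy} {M N : Tm} {μ : STy} (h : Der Γ (.app M N) μ) :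
    ∃ σ, Der Γ M (.arrow σ μ) ∧ ∀ ν, IsComp ν σ → Der Γ N ν := by
  generalize hP : Tm.app M N = P at h
  induction h with
  | var => cases hP
  | lam => cases hP
  | omega Γ =>
    refine ⟨.strict .omega, Der.omega_arrow_omega Γ M, fun ν hν => ?_⟩
    cases hν
    exact Der.omega Γ N
  | sub _ hμν ih =>
    obtain ⟨σ, hM, hN⟩ := ih hP
    exact ⟨σ, hM.sub_codomain hμν, hN⟩
  | app hM hN =>
    cases hP
    exact ⟨_, hM, hN⟩
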